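/- arXiv:1703.06238 — 7 statements merged into one kernel-verified Lean document; each statement's English description precedes it below -/
import Mathlib

section
/- Let n be a positive integer. Define T(φ) = ∫_{M_n(ℝ)} φ(x, 0) dx for Schwartz functions φ on M_n(ℝ) × M_n(ℝ), the integral taken with respect to Lebesgue measure. Then: (1) T is a well-defined tempered distribution (the integral converges and T is a continuous linear functional); (2) for all g, h ∈ GL_n(ℝ) and every Schwartz φ, T((x,y) ↦ φ(g x h⁻¹, h y g⁻¹)) = |det g|^{−n} · |det h|^{n} · T(φ); (3) there exists a Schwartz function φ with T((x,y) ↦ φ(yᵀ, xᵀ)) ≠ T(φ). -/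
/-!
Restricting to `Mₙ(ℝ) × {0}` and then integrating is a composition of continuous linear maps
between Schwartz spaces. The substitution `x ↦ g x h⁻¹` is the linear map with matrix
`g ⊗ (h⁻¹)ᵀ`, whose determinant is `det g ^ n · det h ^ (-n)`; this gives the equivariance.
A bump function centred at `(1, 0)` with outer radius `‖1‖` has positive integral along
`Mₙ(ℝ) × {0}`, while its image under `(x, y) ↦ (yᵀ, xᵀ)` vanishes there.
-/

open SchwartzMap Matrix MeasureTheory

attribute [local instance] Matrix.normedAddCommGroup Matrix.normedSpace

noncomputable instance (n : ℕ) : MeasureSpace (Matrix (Fin n) (Fin n) ℝ) :=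
  inferInstanceAs (MeasureSpace (Fin n → Fin n → ℝ))

-- The topology induced by the norm is not reducibly the product topology that instance search
-- finds on `Matrix`, so the Borel and Haar instances are stated for it explicitly.
instance (n : ℕ) : @BorelSpace (Matrix (Fin n) (Fin n) ℝ)
    (UniformSpace.toTopologicalSpace (self := PseudoMetricSpace.toUniformSpace)) _ :=
  inferInstanceAs (BorelSpace (Fin n → Fin n → ℝ))

instance (n : ℕ) : @Measure.IsAddHaarMeasure (Matrix (Fin n) (Fin n) ℝ) _
    (UniformSpace.toTopologicalSpace (self := PseudoMetricSpace.toUniformSpace)) _ volume :=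
  Measure.pi.isAddHaarMeasure (fun _ : Fin n => (volume : Measure (Fin n → ℝ)))

local notation "𝕄" n:max => Matrix (Fin n) (Fin n) ℝ

namespace SchwartzMap

variable (𝕜 : Type*) {D E V : Type*} [RCLike 𝕜] [NormedAddCommGroup D] [NormedSpace ℝ D]
  [NormedAddCommGroup E] [NormedSpace ℝ E] [NormedAddCommGroup V] [NormedSpace ℝ V]
  [NormedSpace 𝕜 V]

noncomputable def restrictFst : 𝓢(D × E, V) →L[𝕜] 𝓢(D, V) :=
  compCLM 𝕜 (ContinuousLinearMap.inl ℝ D E).hasTemperateGrowth ⟨1, 1, fun x => by simp⟩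

@[simp]
lemma restrictFst_apply (φ : 𝓢(D × E, V)) (x : D) : restrictFst 𝕜 φ x = φ (x, 0) := rfl

end SchwartzMap

theorem MeasureTheory.Measure.integral_comp_linearMap {E F : Type*} [NormedAddCommGroup E]
    [NormedSpace ℝ E] [MeasurableSpace E] [BorelSpace E] [FiniteDimensional ℝ E]
    (μ : Measure E) [μ.IsAddHaarMeasure] [NormedAddCommGroup F] [NormedSpace ℝ F]
    {f : E →ₗ[ℝ] E} (hf : LinearMap.det f ≠ 0) (g : E → F) :
    ∫ x, g (f x) ∂μ = |LinearMap.det f|⁻¹ • ∫ x, g x ∂μ := by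
  have hf_emb : MeasurableEmbedding f :=
    (f.equivOfDetNeZero hf).toContinuousLinearEquiv.toHomeomorph.measurableEmbedding
  rw [← hf_emb.integral_map, Measure.map_linearMap_addHaar_eq_smul_addHaar μ hf,
    integral_smul_measure, ENNReal.toReal_ofReal (abs_nonneg _), abs_inv]

namespace Matrix

variable {n R : Type*} [Fintype n] [DecidableEq n] [CommRing R]

def mulLeftRight (A B : Matrix n n R) : Matrix n n R →ₗ[R] Matrix n n R :=
  LinearMap.mulRight R B ∘ₗ LinearMap.mulLeft R A

@[simp]
lemma mulLeftRight_apply (A B x : Matrix n n R) : mulLeftRight A B x = A * x * B := rfl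

open Kronecker in
lemma toMatrix_mulLeftRight (A B : Matrix n n R) :
    LinearMap.toMatrix (stdBasis R n n) (stdBasis R n n) (mulLeftRight A B) = A ⊗ₖ Bᵀ := by
  ext ⟨i, j⟩ ⟨k, l⟩
  rw [LinearMap.toMatrix_apply, stdBasis_eq_single]
  simp [stdBasis, Pi.basis_repr, mul_apply, single, kroneckerMap_apply, ite_and, mul_comm]

lemma det_mulLeftRight (A B : Matrix n n R) :
    LinearMap.det (mulLeftRight A B) = A.det ^ Fintype.card n * B.det ^ Fintype.card n := by
  rw [← LinearMap.det_toMatrix (stdBasis R n n), toMatrix_mulLeftRight, det_kronecker,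
    det_transpose]

end Matrix

theorem integral_comp_units_mul_mul_inv {n : ℕ} {F : Type*} [NormedAddCommGroup F]
    [NormedSpace ℝ F] (g h : (𝕄 n)ˣ) (f : 𝕄 n → F) :
    ∫ x, f ((g : 𝕄 n) * x * (↑h⁻¹ : 𝕄 n)) =
      (|(g : 𝕄 n).det| ^ (-(n : ℤ)) * |(h : 𝕄 n).det| ^ (n : ℤ)) • ∫ x, f x := by
  have hdet : LinearMap.det (mulLeftRight (g : 𝕄 n) (↑h⁻¹ : 𝕄 n)) =
      (g : 𝕄 n).det ^ n * (h : 𝕄 n).det⁻¹ ^ n := by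
    rw [det_mulLeftRight, coe_units_inv, det_nonsing_inv, Ring.inverse_eq_inv', Fintype.card_fin]
  have hg : (g : 𝕄 n).det ≠ 0 := ((isUnit_iff_isUnit_det _).mp g.isUnit).ne_zero
  have hh : (h : 𝕄 n).det ≠ 0 := ((isUnit_iff_isUnit_det _).mp h.isUnit).ne_zero
  have hdet_ne : LinearMap.det (mulLeftRight (g : 𝕄 n) (↑h⁻¹ : 𝕄 n)) ≠ 0 := by
    rw [hdet]
    exact mul_ne_zero (pow_ne_zero _ hg) (pow_ne_zero _ (inv_ne_zero hh))
  calc ∫ x, f ((g : 𝕄 n) * x * (↑h⁻¹ : 𝕄 n))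
      = ∫ x, f (mulLeftRight (g : 𝕄 n) (↑h⁻¹ : 𝕄 n) x) := rfl
    _ = |LinearMap.det (mulLeftRight (g : 𝕄 n) (↑h⁻¹ : 𝕄 n))|⁻¹ • ∫ x, f x :=
      Measure.integral_comp_linearMap volume hdet_ne f
    _ = (|(g : 𝕄 n).det| ^ (-(n : ℤ)) * |(h : 𝕄 n).det| ^ (n : ℤ)) • ∫ x, f x := by
      rw [hdet, abs_mul, abs_pow, abs_pow, abs_inv, _root_.zpow_neg, zpow_natCast, zpow_natCast,
        mul_inv, inv_pow, inv_inv]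

namespace ContDiffBump

section SchwartzMap

variable {E : Type*} [NormedAddCommGroup E] [NormedSpace ℝ E] [HasContDiffBump E]
  [FiniteDimensional ℝ E] {c : E}

noncomputable def toSchwartzMap (b : ContDiffBump c) : 𝓢(E, ℂ) :=
  (b.hasCompactSupport.comp_left Complex.ofReal_zero).toSchwartzMap
    (Complex.ofRealCLM.contDiff.comp b.contDiff)

@[simp]
lemma toSchwartzMap_apply (b : ContDiffBump c) (x : E) : b.toSchwartzMap x = b x := rfl

end SchwartzMap

variable {E F : Type*} [NormedAddCommGroup E] [NormedSpace ℝ E] [NormedAddCommGroup F]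
  [NormedSpace ℝ F] [HasContDiffBump (E × F)] {c : E}

lemma integral_prodMk_zero_pos [MeasurableSpace E] [OpensMeasurableSpace E] [ProperSpace E]
    (μ : Measure E) [μ.IsOpenPosMeasure] [IsFiniteMeasureOnCompacts μ]
    (b : ContDiffBump (c, (0 : F))) : 0 < ∫ x, b (x, 0) ∂μ := by
  have hsupp : HasCompactSupport fun x : E => b (x, 0) :=
    HasCompactSupport.intro (isCompact_closedBall c b.rOut) fun x hx =>
      b.zero_of_le_dist (by simpa [Prod.dist_eq] using (not_le.mp hx).le)
  have hcont : Continuous fun x : E => b (x, 0) := b.continuous.comp (.prodMk_left 0)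
  exact hcont.integral_pos_of_hasCompactSupport_nonneg_nonzero
    hsupp (fun _ => b.nonneg) (b.pos_of_mem_ball (Metric.mem_ball_self b.rOut_pos)).ne'

lemma apply_zero_prodMk_eq_zero (b : ContDiffBump (c, (0 : F))) (hb : b.rOut ≤ ‖c‖) (y : F) :
    b (0, y) = 0 :=
  b.zero_of_le_dist (hb.trans (by simp [Prod.dist_eq]))

end ContDiffBump

theorem haar_measure_on_first_factor_counterexample (n : ℕ) (hn : 0 < n) :
    (∀ φ : 𝓢(Matrix (Fin n) (Fin n) ℝ × Matrix (Fin n) (Fin n) ℝ, ℂ),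
      Integrable (fun x : Matrix (Fin n) (Fin n) ℝ => φ (x, 0))) ∧
    ∃ T : 𝓢(Matrix (Fin n) (Fin n) ℝ × Matrix (Fin n) (Fin n) ℝ, ℂ) →L[ℂ] ℂ,
      (∀ φ : 𝓢(Matrix (Fin n) (Fin n) ℝ × Matrix (Fin n) (Fin n) ℝ, ℂ),
        T φ = ∫ x : Matrix (Fin n) (Fin n) ℝ, φ (x, 0)) ∧
      (∀ (g h : (Matrix (Fin n) (Fin n) ℝ)ˣ)
        (φ ψ : 𝓢(Matrix (Fin n) (Fin n) ℝ × Matrix (Fin n) (Fin n) ℝ, ℂ)),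
        (∀ p : Matrix (Fin n) (Fin n) ℝ × Matrix (Fin n) (Fin n) ℝ,
          ψ p = φ ((g : Matrix (Fin n) (Fin n) ℝ) * p.1 * (↑h⁻¹ : Matrix (Fin n) (Fin n) ℝ),
            (h : Matrix (Fin n) (Fin n) ℝ) * p.2 * (↑g⁻¹ : Matrix (Fin n) (Fin n) ℝ))) →
        T ψ = (((|((g : Matrix (Fin n) (Fin n) ℝ)).det| ^ (-(n : ℤ)) *
          |((h : Matrix (Fin n) (Fin n) ℝ)).det| ^ (n : ℤ) : ℝ) : ℂ)) * T φ) ∧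
      ∃ φ ψ : 𝓢(Matrix (Fin n) (Fin n) ℝ × Matrix (Fin n) (Fin n) ℝ, ℂ),
        (∀ p : Matrix (Fin n) (Fin n) ℝ × Matrix (Fin n) (Fin n) ℝ,
          ψ p = φ (p.2ᵀ, p.1ᵀ)) ∧ T ψ ≠ T φ := by
  refine ⟨fun φ => (restrictFst ℂ φ).integrable, (integralCLM ℂ volume).comp (restrictFst ℂ),
    fun φ => rfl, fun g h φ ψ hψ => ?_, ?_⟩
  · simp only [ContinuousLinearMap.comp_apply, integralCLM_apply, restrictFst_apply, hψ,
      Matrix.mul_zero, Matrix.zero_mul]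
    rw [← Complex.real_smul]
    exact integral_comp_units_mul_mul_inv g h fun x => φ (x, 0)
  · have : NeZero n := ⟨hn.ne'⟩
    have h_one : 0 < ‖(1 : 𝕄 n)‖ := norm_pos_iff.mpr one_ne_zero
    let b : ContDiffBump ((1, 0) : 𝕄 n × 𝕄 n) :=
      ⟨‖(1 : 𝕄 n)‖ / 2, ‖(1 : 𝕄 n)‖, by positivity, by linarith⟩
    let σ : (𝕄 n × 𝕄 n) ≃L[ℝ] 𝕄 n × 𝕄 n :=
      (ContinuousLinearEquiv.prodComm ℝ (𝕄 n) (𝕄 n)).trans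
        ((transposeLinearEquiv (Fin n) (Fin n) ℝ ℝ).toContinuousLinearEquiv.prodCongr
          (transposeLinearEquiv (Fin n) (Fin n) ℝ ℝ).toContinuousLinearEquiv)
    let ψ := compCLMOfContinuousLinearEquiv ℂ σ b.toSchwartzMap
    have hψ : ∀ p, ψ p = b.toSchwartzMap (p.2ᵀ, p.1ᵀ) := fun p => rfl
    refine ⟨b.toSchwartzMap, ψ, hψ, ?_⟩
    simp only [ContinuousLinearMap.comp_apply, integralCLM_apply, restrictFst_apply, hψ,
      transpose_zero, ContDiffBump.toSchwartzMap_apply, b.apply_zero_prodMk_eq_zero le_rfl,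
      Complex.ofReal_zero, integral_zero, integral_complex_ofReal]
    exact_mod_cast (b.integral_prodMk_zero_pos volume).ne
end

section
/- Let k be a field of characteristic zero, A = A₀ ⊕ A₁ a graded algebra over k, and let E, E', E'' be graded A-modules with E = E' ⊕ E'' as graded A-modules (so Eᵢ = E'ᵢ ⊕ E''ᵢ for i ∈ ℤ/2ℤ). If two of E, E', E'' are complex, then so is the third. -/
/-- A (ℤ/2ℤ-)graded algebra over `k`. -/
structure GradedAlgebraStruct (k A : Type*) [CommSemiring k] [CommRing A] [Algebra k A] where
  deg : ZMod 2 → Submodule k A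
  one_mem : (1 : A) ∈ deg 0
  mul_mem : ∀ i j : ZMod 2, ∀ a ∈ deg i, ∀ b ∈ deg j, a * b ∈ deg (i + j)
  isCompl_deg : IsCompl (deg 0) (deg 1)

/-- A grading `E = E₀ ⊕ E₁` (by `k`-subspaces) on an `A`-module `E` compatible with
the grading of `A`: `Aᵢ • Eⱼ ⊆ E_{i+j}`. -/
structure GradedModuleStruct (k A : Type*) [CommSemiring k] [CommRing A] [Algebra k A]
    (G : GradedAlgebraStruct k A)
    (E : Type*) [AddCommGroup E] [Module A E] [Module k E] [IsScalarTower k A E] where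
  deg : ZMod 2 → Submodule k E
  smul_mem : ∀ i j : ZMod 2, ∀ a ∈ G.deg i, ∀ e ∈ deg j, a • e ∈ deg (i + j)
  isCompl_deg : IsCompl (deg 0) (deg 1)

/-- A graded module is complex if `E₀` and `E₁` are isomorphic as `A₀`-modules, i.e.
there is a `k`-linear isomorphism `E₀ ≃ E₁` commuting with the action of `A₀`. -/
def GradedModuleStruct.IsComplex {k A : Type*} [CommSemiring k] [CommRing A] [Algebra k A]
    {G : GradedAlgebraStruct k A}
    {E : Type*} [AddCommGroup E] [Module A E] [Module k E] [IsScalarTower k A E]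
    (M : GradedModuleStruct k A G E) : Prop :=
  ∃ f : (M.deg 0) ≃ₗ[k] (M.deg 1),
    ∀ a ∈ G.deg 0, ∀ x : M.deg 0, ∀ hx : a • (x : E) ∈ M.deg 0,
      ((f ⟨a • (x : E), hx⟩ : E)) = a • ((f x : E))

/-!
Over the even subalgebra `A₀`, the even and odd parts satisfy `Eᵢ ≅ E'ᵢ × E''ᵢ`, and `A₀` is a
semisimple ring, being a finite-dimensional subalgebra of the reduced ring `A`. So if `E'` and
`E''` are complex, so is `E`, and the other two implications are cancellation laws
`V × U ≅ W × U → V ≅ W` for semisimple modules with `U` of finite length. These reduce, one simple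
summand `S` of `U` at a time, to a block-matrix argument for `ψ : V × S ≅ W × S`: by Schur the
corner `S → S` of `ψ` is zero or invertible; in the second case a Schur-complement shear gives
`V ≅ W`, and in the first a shear along a section of the corner `V → S` makes it the identity.
-/

open LinearMap

section Cancellation

variable {R V W S : Type*} [Ring R] [AddCommGroup V] [Module R V] [AddCommGroup W] [Module R W]
  [AddCommGroup S] [Module R S]

instance IsSemisimpleModule.prod [IsSemisimpleModule R V] [IsSemisimpleModule R W] :
    IsSemisimpleModule R (V × W) := by
  rw [← Submodule.topEquiv.isSemisimpleModule_iff_of_bijective (LinearEquiv.bijective _),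
    ← LinearMap.sup_range_inl_inr]
  exact .sup (.range _) (.range _)

theorem LinearEquiv.nonempty_of_prod_of_snd_eq (ψ : (V × S) ≃ₗ[R] (W × S))
    (h : ∀ x, (ψ x).2 = x.2) : Nonempty (V ≃ₗ[R] W) := by
  have hψ : ∀ v, ψ (v, 0) = ((ψ (v, 0)).1, 0) := fun v ↦ Prod.ext rfl (h _)
  have hψsymm : ∀ w, ψ.symm (w, 0) = ((ψ.symm (w, 0)).1, 0) := fun w ↦
    Prod.ext rfl (by simpa using (h (ψ.symm (w, 0))).symm)
  refine ⟨.ofLinearMap (f := fst R W S ∘ₗ ψ.toLinearMap ∘ₗ inl R V S)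
    (g := fst R V S ∘ₗ ψ.symm.toLinearMap ∘ₗ inl R W S) ?_ ?_⟩
  · ext w
    simp [← hψsymm]
  · ext v
    simp [← hψ]

theorem LinearEquiv.nonempty_of_prod_of_bijective (ψ : (V × S) ≃ₗ[R] (W × S))
    (hd : Function.Bijective (snd R W S ∘ₗ ψ.toLinearMap ∘ₗ inr R V S)) :
    Nonempty (V ≃ₗ[R] W) := by
  set δ := LinearEquiv.ofBijective _ hd
  set c := snd R W S ∘ₗ ψ.toLinearMap ∘ₗ inl R V S
  have hψ : ∀ v s, (ψ (v, s)).2 = c v + δ s := fun v s ↦ by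
    simp [c, δ, ← Prod.snd_add, ← map_add]
  -- the Schur-complement shear `(v, s) ↦ (v, δ⁻¹ (s - c v))` makes `ψ` fix second coordinates
  refine (((LinearEquiv.refl R V).skewProd δ.symm (-(δ.symm.toLinearMap ∘ₗ c))).trans ψ
    ).nonempty_of_prod_of_snd_eq fun ⟨v, s⟩ ↦ ?_
  simp [hψ]

theorem LinearEquiv.nonempty_of_prod_of_isSimpleModule [IsSemisimpleModule R V]
    [IsSimpleModule R S] (ψ : (V × S) ≃ₗ[R] (W × S)) : Nonempty (V ≃ₗ[R] W) := by
  set c := snd R W S ∘ₗ ψ.toLinearMap ∘ₗ inl R V S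
  set d := snd R W S ∘ₗ ψ.toLinearMap ∘ₗ inr R V S
  have hψ : ∀ v s, (ψ (v, s)).2 = c v + d s := fun v s ↦ by
    simp [c, d, ← Prod.snd_add, ← map_add]
  obtain hd | hd := d.bijective_or_eq_zero
  · exact ψ.nonempty_of_prod_of_bijective hd
  have hc : Function.Surjective c := fun s ↦ by
    obtain ⟨⟨v, t⟩, h⟩ := ψ.surjective (0, s)
    exact ⟨v, by simpa [hψ, hd] using congrArg Prod.snd h⟩
  obtain ⟨ι, hι⟩ := IsSemisimpleModule.lifting_property c hc LinearMap.id
  -- after the shear `(v, s) ↦ (v + ι s, s)` the corner `d` becomes `c ∘ ι = id`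
  let shear : (V × S) ≃ₗ[R] (V × S) := (LinearEquiv.prodComm R V S).trans
    (((LinearEquiv.refl R S).skewProd (LinearEquiv.refl R V) ι).trans (LinearEquiv.prodComm R S V))
  refine (shear.trans ψ).nonempty_of_prod_of_bijective ?_
  convert Function.bijective_id
  ext s
  simpa [shear, hψ, hd] using LinearMap.congr_fun hι s

theorem IsFiniteLength.nonempty_linearEquiv_of_prod {U : Type*} [AddCommGroup U] [Module R U]
    (hU : IsFiniteLength R U) [hUss : IsSemisimpleModule R U] [IsSemisimpleModule R V]
    (ψ : (V × U) ≃ₗ[R] (W × U)) : Nonempty (V ≃ₗ[R] W) := by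
  induction hU generalizing hUss with
  | @of_subsingleton U _ _ _ =>
    have : Unique U := uniqueOfSubsingleton 0
    exact ⟨LinearEquiv.prodUnique.symm ≪≫ₗ ψ ≪≫ₗ LinearEquiv.prodUnique⟩
  | @of_simple_quotient U _ _ N _ _ ih =>
    obtain ⟨C, hC⟩ := exists_isCompl N
    let e : U ≃ₗ[R] N × (U ⧸ N) := (N.prodEquivOfIsCompl C hC).symm ≪≫ₗ
      (LinearEquiv.refl R N).prodCongr (N.quotientEquivOfIsCompl C hC).symm
    let ψ' : ((V × N) × (U ⧸ N)) ≃ₗ[R] ((W × N) × (U ⧸ N)) :=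
      LinearEquiv.prodAssoc R V N (U ⧸ N) ≪≫ₗ ((LinearEquiv.refl R V).prodCongr e).symm ≪≫ₗ ψ ≪≫ₗ
        (LinearEquiv.refl R W).prodCongr e ≪≫ₗ (LinearEquiv.prodAssoc R W N (U ⧸ N)).symm
    obtain ⟨φ⟩ := ψ'.nonempty_of_prod_of_isSimpleModule
    exact ih φ

end Cancellation

def Submodule.prodEquivProd {R M N : Type*} [Semiring R] [AddCommMonoid M] [Module R M]
    [AddCommMonoid N] [Module R N] (p : Submodule R M) (q : Submodule R N) :
    p.prod q ≃ₗ[R] p × q :=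
  { Equiv.Set.prod (p : Set M) (q : Set N) with
    map_add' := fun _ _ ↦ rfl
    map_smul' := fun _ _ ↦ rfl }

theorem Subalgebra.isSemisimpleRing_of_isReduced {k A : Type*} [Field k] [CommRing A]
    [Algebra k A] [FiniteDimensional k A] [IsReduced A] (S : Subalgebra k A) : IsSemisimpleRing S :=
  have : IsReduced S := isReduced_of_injective S.val Subtype.val_injective
  have : IsArtinianRing S := isArtinian_of_tower k inferInstance
  IsArtinianRing.isSemisimpleRing_of_isReduced S

namespace GradedAlgebraStruct

variable {k A : Type*} [CommSemiring k] [CommRing A] [Algebra k A] (G : GradedAlgebraStruct k A)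

def evenSubalgebra : Subalgebra k A where
  carrier := G.deg 0
  mul_mem' ha hb := by simpa using G.mul_mem 0 0 _ ha _ hb
  add_mem' := (G.deg 0).add_mem
  one_mem' := G.one_mem
  algebraMap_mem' c := by
    simpa [Algebra.algebraMap_eq_smul_one] using (G.deg 0).smul_mem c G.one_mem

end GradedAlgebraStruct

namespace GradedModuleStruct

section Degrees

variable {k A E : Type*} [CommSemiring k] [CommRing A] [Algebra k A] {G : GradedAlgebraStruct k A}
  [AddCommGroup E] [Module A E] [Module k E] [IsScalarTower k A E] (M : GradedModuleStruct k A G E)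

def degSubmodule (j : ZMod 2) : Submodule G.evenSubalgebra E where
  toAddSubmonoid := (M.deg j).toAddSubmonoid
  smul_mem' a x hx := zero_add j ▸ M.smul_mem 0 j a a.2 x hx

theorem isComplex_iff :
    M.IsComplex ↔ Nonempty (M.degSubmodule 0 ≃ₗ[G.evenSubalgebra] M.degSubmodule 1) := by
  constructor
  · rintro ⟨f, hf⟩
    exact ⟨{ f with map_smul' := fun a x ↦ Subtype.ext (hf a a.2 x _) }⟩
  · rintro ⟨g⟩
    exact ⟨g.restrictScalars k, fun a ha x _ ↦ congrArg Subtype.val (g.map_smul ⟨a, ha⟩ x)⟩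

end Degrees

theorem isFiniteLength_degSubmodule {k A E : Type*} [Field k] [CommRing A] [Algebra k A]
    [FiniteDimensional k A] {G : GradedAlgebraStruct k A} [IsSemisimpleRing G.evenSubalgebra]
    [AddCommGroup E] [Module A E] [Module k E] [IsScalarTower k A E] [Module.Finite A E]
    (M : GradedModuleStruct k A G E) (j : ZMod 2) :
    IsFiniteLength G.evenSubalgebra (M.degSubmodule j) := by
  have : Module.Finite k E := .trans A E
  have : Module.Finite k (M.degSubmodule j) := FiniteDimensional.of_injective
    ((M.degSubmodule j).subtype.restrictScalars k) Subtype.val_injective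
  have : Module.Finite G.evenSubalgebra (M.degSubmodule j) := .of_restrictScalars_finite k _ _
  exact (IsSemisimpleModule.finite_tfae.out 0 3).mp this

section Prod

variable {k A E' E'' : Type*} [CommSemiring k] [CommRing A] [Algebra k A]
  {G : GradedAlgebraStruct k A}
  [AddCommGroup E'] [Module A E'] [Module k E'] [IsScalarTower k A E']
  [AddCommGroup E''] [Module A E''] [Module k E''] [IsScalarTower k A E'']
  {M' : GradedModuleStruct k A G E'} {M'' : GradedModuleStruct k A G E''}
  {M : GradedModuleStruct k A G (E' × E'')}

theorem degSubmodule_eq_prod (hM : ∀ i, M.deg i = (M'.deg i).prod (M''.deg i)) (j : ZMod 2) :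
    M.degSubmodule j = (M'.degSubmodule j).prod (M''.degSubmodule j) :=
  Submodule.ext fun x ↦ SetLike.ext_iff.mp (hM j) x

def degSubmoduleEquivProd (hM : ∀ i, M.deg i = (M'.deg i).prod (M''.deg i)) (j : ZMod 2) :
    M.degSubmodule j ≃ₗ[G.evenSubalgebra] M'.degSubmodule j × M''.degSubmodule j :=
  LinearEquiv.ofEq _ _ (degSubmodule_eq_prod hM j) ≪≫ₗ Submodule.prodEquivProd _ _

end Prod

end GradedModuleStruct

theorem gradedModule_direct_sum_two_complex_implies_third_general
    {k A E' E'' : Type*} [Field k]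
    [CommRing A] [Algebra k A] [FiniteDimensional k A] [IsSemisimpleRing A]
    [AddCommGroup E'] [Module A E'] [Module k E'] [IsScalarTower k A E'] [Module.Finite A E']
    [AddCommGroup E''] [Module A E''] [Module k E''] [IsScalarTower k A E''] [Module.Finite A E'']
    (G : GradedAlgebraStruct k A)
    (M' : GradedModuleStruct k A G E') (M'' : GradedModuleStruct k A G E'')
    (M : GradedModuleStruct k A G (E' × E''))
    (hM : ∀ i : ZMod 2, M.deg i = (M'.deg i).prod (M''.deg i)) :
    (M'.IsComplex → M''.IsComplex → M.IsComplex) ∧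
    (M.IsComplex → M'.IsComplex → M''.IsComplex) ∧
    (M.IsComplex → M''.IsComplex → M'.IsComplex) := by
  have := G.evenSubalgebra.isSemisimpleRing_of_isReduced
  let e₀ := GradedModuleStruct.degSubmoduleEquivProd hM 0
  let e₁ := GradedModuleStruct.degSubmoduleEquivProd hM 1
  simp only [GradedModuleStruct.isComplex_iff]
  refine ⟨fun ⟨f'⟩ ⟨f''⟩ ↦ ⟨e₀ ≪≫ₗ f'.prodCongr f'' ≪≫ₗ e₁.symm⟩, fun ⟨f⟩ ⟨f'⟩ ↦ ?_,
    fun ⟨f⟩ ⟨f''⟩ ↦ ?_⟩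
  · exact (M'.isFiniteLength_degSubmodule 0).nonempty_linearEquiv_of_prod
      (.prodComm _ _ _ ≪≫ₗ e₀.symm ≪≫ₗ f ≪≫ₗ e₁ ≪≫ₗ f'.symm.prodCongr (.refl _ _) ≪≫ₗ
        .prodComm _ _ _)
  · exact (M''.isFiniteLength_degSubmodule 0).nonempty_linearEquiv_of_prod
      (e₀.symm ≪≫ₗ f ≪≫ₗ e₁ ≪≫ₗ (LinearEquiv.refl _ _).prodCongr f''.symm)

theorem gradedModule_direct_sum_two_complex_implies_third
    {k A E' E'' : Type*} [Field k] [CharZero k]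
    [CommRing A] [Algebra k A] [FiniteDimensional k A] [IsSemisimpleRing A]
    [AddCommGroup E'] [Module A E'] [Module k E'] [IsScalarTower k A E'] [Module.Finite A E']
    [AddCommGroup E''] [Module A E''] [Module k E''] [IsScalarTower k A E''] [Module.Finite A E'']
    (G : GradedAlgebraStruct k A)
    (M' : GradedModuleStruct k A G E') (M'' : GradedModuleStruct k A G E'')
    (M : GradedModuleStruct k A G (E' × E''))
    (hM : ∀ i : ZMod 2, M.deg i = (M'.deg i).prod (M''.deg i)) :
    (M'.IsComplex → M''.IsComplex → M.IsComplex) ∧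
    (M.IsComplex → M'.IsComplex → M''.IsComplex) ∧
    (M.IsComplex → M''.IsComplex → M'.IsComplex) :=
  gradedModule_direct_sum_two_complex_implies_third_general G M' M'' M hM
end

section
/- Let k be a field of characteristic zero, A = A₀ ⊕ A₁ a graded algebra over k which is complex, and E = E₀ ⊕ E₁ a graded A-module. Then: (1) E is complex, i.e. E₀ and E₁ are isomorphic as A₀-modules (indeed multiplication by any invertible element a ∈ A₁ gives such an isomorphism E₀ → E₁); and (2) the natural A-module homomorphism A ⊗_{A₀} E₀ → E, a ⊗ e ↦ a·e, is an isomorphism. -/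
/-!
Lemma `a0e` of the paper: if the graded algebra `A` is complex, then every graded
`A`-module `E` is complex (multiplication by an invertible odd element of `A` gives
an isomorphism `E₀ → E₁`), and the natural map `A ⊗_{A₀} E₀ → E`, `a ⊗ e ↦ a • e`,
is an isomorphism.  Here the subalgebra `A₀` is represented by a commutative ring
`R` mapping isomorphically onto the even part of `A`.
-/

open TensorProduct

/-- A graded algebra is complex if its odd part contains an invertible element. -/
def GradedAlgebraStruct.IsComplex {k A : Type*} [CommSemiring k] [CommRing A] [Algebra k A]
    (G : GradedAlgebraStruct k A) : Prop :=
  ∃ a ∈ G.deg 1, IsUnit a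

/-- The natural `R`-bilinear map `A × E₀ → E`, `(a, x) ↦ a • x`. -/
noncomputable def smulBilin (R A E : Type*) [CommRing R] [CommRing A] [Algebra R A]
    [AddCommGroup E] [Module A E] [Module R E] [IsScalarTower R A E]
    (E₀ : Submodule R E) : A →ₗ[R] (E₀ →ₗ[R] E) where
  toFun a :=
    { toFun := fun x => a • (x : E)
      map_add' := fun x y => by simp [smul_add]
      map_smul' := fun r x => by simp [smul_comm r a] }
  map_add' := fun a b => by ext x; simp [add_smul]
  map_smul' := fun r a => by ext x; simp [smul_assoc]

/-!
Multiplication by an odd unit `u` of `A` exchanges the even and odd parts of `A` and of `E`.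
Hence `A = A₀ ⊕ A₀ u`, so every tensor in `A ⊗_{A₀} E₀` has the form `1 ⊗ x + u ⊗ y`; it is
sent to `x + u • y` with `x ∈ E₀` and `u • y ∈ E₁`, and `E = E₀ ⊕ E₁ = E₀ ⊕ u E₀`.
-/

theorem TensorProduct.exists_one_tmul_add_tmul_eq {R A N : Type*} [CommSemiring R] [Semiring A]
    [Algebra R A] [AddCommMonoid N] [Module R N] {a : A}
    (h : ∀ c : A, ∃ r s : R, algebraMap R A r + algebraMap R A s * a = c) (t : A ⊗[R] N) :
    ∃ x y : N, (1 : A) ⊗ₜ[R] x + a ⊗ₜ[R] y = t := by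
  induction t using TensorProduct.induction_on with
  | zero => exact ⟨0, 0, by simp⟩
  | tmul c n =>
    obtain ⟨r, s, rfl⟩ := h c
    refine ⟨r • n, s • n, ?_⟩
    rw [Algebra.algebraMap_eq_smul_one, ← _root_.Algebra.smul_def s a, add_tmul, smul_tmul,
      smul_tmul]
  | add t t' ht ht' =>
    obtain ⟨x, y, rfl⟩ := ht
    obtain ⟨x', y', rfl⟩ := ht'
    exact ⟨x + x', y + y', by simp only [tmul_add]; abel⟩

namespace GradedAlgebraStruct

variable {k A : Type*} [CommRing k] [CommRing A] [Algebra k A] (G : GradedAlgebraStruct k A)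

theorem mul_mem_of_add_eq {i j l : ZMod 2} (h : i + j = l) {a b : A} (ha : a ∈ G.deg i)
    (hb : b ∈ G.deg j) : a * b ∈ G.deg l :=
  h ▸ G.mul_mem i j a ha b hb

theorem exists_add_eq (c : A) : ∃ c₀ c₁, c₀ ∈ G.deg 0 ∧ c₁ ∈ G.deg 1 ∧ c₀ + c₁ = c :=
  Submodule.codisjoint_iff_exists_add_eq.mp G.isCompl_deg.codisjoint c

theorem mem_deg_one_of_mul_eq_one {a b : A} (ha : a ∈ G.deg 1) (hab : a * b = 1) :
    b ∈ G.deg 1 := by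
  obtain ⟨b₀, b₁, hb₀, hb₁, rfl⟩ := G.exists_add_eq b
  have hab₀_odd : a * b₀ ∈ G.deg 1 := G.mul_mem_of_add_eq (by decide) ha hb₀
  have hab₀_even : a * b₀ ∈ G.deg 0 := by
    rw [show a * b₀ = 1 - a * b₁ by rw [← hab]; ring]
    exact sub_mem G.one_mem (G.mul_mem_of_add_eq (by decide) ha hb₁)
  have hab₀ : a * b₀ = 0 :=
    Submodule.disjoint_def.mp G.isCompl_deg.disjoint _ hab₀_even hab₀_odd
  have hb₀ : b₀ = 0 :=
    calc b₀ = (b₀ + b₁) * (a * b₀) := by rw [← mul_assoc, mul_comm _ a, hab, one_mul]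
      _ = 0 := by rw [hab₀, mul_zero]
  rwa [hb₀, zero_add]

theorem exists_algebraMap_add_algebraMap_mul_eq {R : Type*} [CommSemiring R] [Algebra R A]
    (hR0 : (G.deg 0 : Set A) ⊆ Set.range (algebraMap R A)) {a : A} (ha : a ∈ G.deg 1)
    (hu : IsUnit a) (c : A) : ∃ r s : R, algebraMap R A r + algebraMap R A s * a = c := by
  obtain ⟨b, hab⟩ := hu.exists_right_inv
  obtain ⟨c₀, c₁, hc₀, hc₁, rfl⟩ := G.exists_add_eq c
  obtain ⟨r, hr⟩ := hR0 hc₀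
  obtain ⟨s, hs⟩ :=
    hR0 (G.mul_mem_of_add_eq (by decide) hc₁ (G.mem_deg_one_of_mul_eq_one ha hab))
  refine ⟨r, s, ?_⟩
  rw [hr, hs, mul_assoc, mul_comm b a, hab, mul_one]

end GradedAlgebraStruct

namespace GradedModuleStruct

variable {k A E : Type*} [CommRing k] [CommRing A] [Algebra k A]
  {G : GradedAlgebraStruct k A} [AddCommGroup E] [Module A E] [Module k E] [IsScalarTower k A E]
  (M : GradedModuleStruct k A G E)

theorem smul_mem_of_add_eq {i j l : ZMod 2} (h : i + j = l) {a : A} {e : E} (ha : a ∈ G.deg i)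
    (he : e ∈ M.deg j) : a • e ∈ M.deg l :=
  h ▸ M.smul_mem i j a ha e he

theorem exists_add_eq (e : E) : ∃ e₀ e₁, e₀ ∈ M.deg 0 ∧ e₁ ∈ M.deg 1 ∧ e₀ + e₁ = e :=
  Submodule.codisjoint_iff_exists_add_eq.mp M.isCompl_deg.codisjoint e

def unitsSmulEquiv (u : Aˣ) (hu : (u : A) ∈ G.deg 1) : M.deg 0 ≃ₗ[k] M.deg 1 :=
  (DistribMulAction.toLinearEquiv k E u).ofSubmodules _ _ <| le_antisymm
    (Submodule.map_le_iff_le_comap.mpr fun _ he => M.smul_mem_of_add_eq (by decide) hu he)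
    (fun e he => ⟨u⁻¹ • e,
      M.smul_mem_of_add_eq (by decide) (G.mem_deg_one_of_mul_eq_one hu u.mul_inv) he,
      smul_inv_smul u e⟩)

@[simp]
theorem coe_unitsSmulEquiv_apply (u : Aˣ) (hu : (u : A) ∈ G.deg 1) (x : M.deg 0) :
    (M.unitsSmulEquiv u hu x : E) = (u : A) • (x : E) :=
  rfl

theorem isComplex (hG : G.IsComplex) : M.IsComplex := by
  obtain ⟨_, ha, u, rfl⟩ := hG
  refine ⟨M.unitsSmulEquiv u ha, fun c _ x _ => ?_⟩
  simp only [coe_unitsSmulEquiv_apply]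
  exact smul_comm _ _ _

theorem eq_zero_of_add_smul_eq_zero {a : A} (ha : a ∈ G.deg 1) (hu : IsUnit a) {x y : E}
    (hx : x ∈ M.deg 0) (hy : y ∈ M.deg 0) (h : x + a • y = 0) : x = 0 ∧ y = 0 := by
  have hx_odd : x ∈ M.deg 1 := by
    rw [eq_neg_of_add_eq_zero_left h]
    exact neg_mem (M.smul_mem_of_add_eq (by decide) ha hy)
  have hx0 : x = 0 := Submodule.disjoint_def.mp M.isCompl_deg.disjoint x hx hx_odd
  refine ⟨hx0, ?_⟩
  rw [hx0, zero_add, ← smul_zero a] at h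
  exact hu.smul_left_cancel.mp h

theorem exists_add_smul_eq {a : A} (ha : a ∈ G.deg 1) (hu : IsUnit a) (e : E) :
    ∃ x y, x ∈ M.deg 0 ∧ y ∈ M.deg 0 ∧ x + a • y = e := by
  obtain ⟨b, hab⟩ := hu.exists_right_inv
  obtain ⟨e₀, e₁, he₀, he₁, rfl⟩ := M.exists_add_eq e
  refine ⟨e₀, b • e₁, he₀,
    M.smul_mem_of_add_eq (by decide) (G.mem_deg_one_of_mul_eq_one ha hab) he₁, ?_⟩
  rw [smul_smul, hab, one_smul]

theorem bijective_lift_smulBilin {R : Type*} [CommRing R] [Algebra R A] [Module R E]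
    [IsScalarTower R A E] (hG : G.IsComplex)
    (hR0 : (G.deg 0 : Set A) ⊆ Set.range (algebraMap R A))
    (E₀ : Submodule R E) (hE₀ : (E₀ : Set E) = M.deg 0) :
    Function.Bijective (lift (smulBilin R A E E₀)) := by
  obtain ⟨a, ha, hu⟩ := hG
  have lift_apply (x y : E₀) :
      lift (smulBilin R A E E₀) ((1 : A) ⊗ₜ x + a ⊗ₜ y) = (x : E) + a • (y : E) := by
    simp [smulBilin]
  have mem_iff (e : E) : e ∈ E₀ ↔ e ∈ M.deg 0 := Set.ext_iff.mp hE₀ e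
  refine ⟨(injective_iff_map_eq_zero _).mpr fun t ht => ?_, fun e => ?_⟩
  · obtain ⟨x, y, rfl⟩ := TensorProduct.exists_one_tmul_add_tmul_eq
      (G.exists_algebraMap_add_algebraMap_mul_eq hR0 ha hu) t
    rw [lift_apply] at ht
    obtain ⟨hx, hy⟩ :=
      M.eq_zero_of_add_smul_eq_zero ha hu ((mem_iff _).mp x.2) ((mem_iff _).mp y.2) ht
    simp [Submodule.coe_eq_zero.mp hx, Submodule.coe_eq_zero.mp hy]
  · obtain ⟨x, y, hx, hy, rfl⟩ := M.exists_add_smul_eq ha hu e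
    exact ⟨_, lift_apply ⟨x, (mem_iff x).mpr hx⟩ ⟨y, (mem_iff y).mpr hy⟩⟩

end GradedModuleStruct

theorem gradedModule_over_complex_gradedAlgebra_general
    {k A E R : Type*} [Field k]
    [CommRing A] [Algebra k A]
    [AddCommGroup E] [Module A E] [Module k E] [IsScalarTower k A E]
    [CommRing R] [Algebra R A]
    [Module R E] [IsScalarTower R A E]
    (G : GradedAlgebraStruct k A) (hGc : G.IsComplex)
    (M : GradedModuleStruct k A G E)
    (hR0 : Set.range (algebraMap R A) = (G.deg 0 : Set A))
    (E₀ : Submodule R E) (hE₀ : (E₀ : Set E) = (M.deg 0 : Set E)) :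
    (∀ a ∈ G.deg 1, IsUnit a →
      ∃ f : (M.deg 0) ≃ₗ[k] (M.deg 1), ∀ x : M.deg 0, ((f x : E)) = a • (x : E)) ∧
    M.IsComplex ∧
    Function.Bijective (TensorProduct.lift (smulBilin R A E E₀)) := by
  refine ⟨?_, M.isComplex hGc, M.bijective_lift_smulBilin hGc hR0.ge E₀ hE₀⟩
  rintro _ ha ⟨u, rfl⟩
  exact ⟨M.unitsSmulEquiv u ha, M.coe_unitsSmulEquiv_apply u ha⟩

theorem gradedModule_over_complex_gradedAlgebra
    {k A E R : Type*} [Field k] [CharZero k]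
    [CommRing A] [Algebra k A] [FiniteDimensional k A] [IsSemisimpleRing A]
    [AddCommGroup E] [Module A E] [Module k E] [IsScalarTower k A E] [Module.Finite A E]
    [CommRing R] [Algebra k R] [Algebra R A] [IsScalarTower k R A]
    [Module R E] [IsScalarTower R A E]
    (G : GradedAlgebraStruct k A) (hGc : G.IsComplex)
    (M : GradedModuleStruct k A G E)
    (hR : Function.Injective (algebraMap R A))
    (hR0 : Set.range (algebraMap R A) = (G.deg 0 : Set A))
    (E₀ : Submodule R E) (hE₀ : (E₀ : Set E) = (M.deg 0 : Set E)) :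
    (∀ a ∈ G.deg 1, IsUnit a →
      ∃ f : (M.deg 0) ≃ₗ[k] (M.deg 1), ∀ x : M.deg 0, ((f x : E)) = a • (x : E)) ∧
    M.IsComplex ∧
    Function.Bijective (TensorProduct.lift (smulBilin R A E E₀)) :=
  gradedModule_over_complex_gradedAlgebra_general G hGc M hR0 E₀ hE₀
end

section
/- Let k be a field of characteristic zero and let A = A₀ ⊕ A₁ be a simple graded involutive algebra over k with involution τ. Then the subalgebra A₀, with the restricted involution τ|_{A₀}, is a simple involutive algebra: A₀ ≠ 0 and every ideal I₀ of A₀ with τ(I₀) = I₀ equals 0 or A₀. -/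
/-- A graded involutive algebra over `k`: a graded algebra with an involutive
`k`-algebra automorphism preserving the grading. -/
structure GradedInvAlgebraStruct (k A : Type*) [CommSemiring k] [CommRing A] [Algebra k A]
    extends GradedAlgebraStruct k A where
  τ : A ≃ₐ[k] A
  τ_invol : ∀ a : A, τ (τ a) = a
  τ_deg : ∀ i : ZMod 2, ∀ a ∈ deg i, τ a ∈ deg i

/-- An ideal `I` of `A` is graded if each element of `I` decomposes as a sum of its
even and odd components, both lying in `I`. -/
def GradedAlgebraStruct.IsGradedIdeal {k A : Type*} [CommSemiring k] [CommRing A] [Algebra k A]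
    (G : GradedAlgebraStruct k A) (I : Ideal A) : Prop :=
  ∀ x ∈ I, ∃ x₀ ∈ G.deg 0, ∃ x₁ ∈ G.deg 1, x₀ ∈ I ∧ x₁ ∈ I ∧ x = x₀ + x₁

/-- A graded involutive algebra is simple if it is non-zero and its only
τ-stable graded ideals are `0` and `A`. -/
def GradedInvAlgebraStruct.IsSimple {k A : Type*} [CommSemiring k] [CommRing A] [Algebra k A]
    (G : GradedInvAlgebraStruct k A) : Prop :=
  Nontrivial A ∧ ∀ I : Ideal A, G.toGradedAlgebraStruct.IsGradedIdeal I →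
    (∀ x : A, x ∈ I ↔ G.τ x ∈ I) → I = ⊥ ∨ I = ⊤


/-!
An ideal `I₀` of `A₀` generates the ideal `A I₀ = I₀ ⊕ A₁ I₀` of `A` (because `A₁ A₁ ⊆ A₀`),
which is graded and τ-stable and whose degree-zero part is `I₀` again. Simplicity of `A` forces
`A I₀ = 0` or `A I₀ = A`, hence `I₀ = 0` or `I₀ = A₀`.
-/

namespace GradedAlgebraStruct

section CommSemiring

variable {k A : Type*} [CommSemiring k] [CommRing A] [Algebra k A] (G : GradedAlgebraStruct k A)

theorem deg_mul_deg_le (i j : ZMod 2) : G.deg i * G.deg j ≤ G.deg (i + j) :=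
  Submodule.mul_le.2 (G.mul_mem i j)

theorem deg_one_mul_le {I₀ : Submodule k A} (hI₀_le : I₀ ≤ G.deg 0) :
    G.deg 1 * I₀ ≤ G.deg 1 := by
  simpa using (mul_le_mul_right hI₀_le (G.deg 1)).trans (G.deg_mul_deg_le 1 0)

theorem top_mul_le_sup_deg_one_mul {I₀ : Submodule k A} (hI₀ : G.deg 0 * I₀ ≤ I₀) :
    ⊤ * (I₀ ⊔ G.deg 1 * I₀) ≤ I₀ ⊔ G.deg 1 * I₀ := by
  have heven_odd : G.deg 0 * G.deg 1 ≤ G.deg 1 := by simpa using G.deg_mul_deg_le 0 1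
  have hodd_odd : G.deg 1 * G.deg 1 ≤ G.deg 0 := G.deg_mul_deg_le 1 1
  rw [← G.isCompl_deg.sup_eq_top, Submodule.mul_sup, Submodule.sup_mul, Submodule.sup_mul,
    ← mul_assoc, ← mul_assoc]
  exact sup_le (sup_le (le_sup_of_le_left hI₀) le_sup_right)
    (sup_le (le_sup_of_le_right (mul_le_mul_left heven_odd I₀))
      (le_sup_of_le_left ((mul_le_mul_left hodd_odd I₀).trans hI₀)))

/-- The ideal `A I₀ = I₀ ⊕ A₁ I₀` generated by an ideal `I₀` of `A₀`. -/
def idealOfDegZero (I₀ : Submodule k A) (hI₀ : G.deg 0 * I₀ ≤ I₀) : Ideal A where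
  toAddSubmonoid := (I₀ ⊔ G.deg 1 * I₀).toAddSubmonoid
  smul_mem' a _ hx := Submodule.mul_le.1 (G.top_mul_le_sup_deg_one_mul hI₀) a trivial _ hx

theorem restrictScalars_idealOfDegZero (I₀ : Submodule k A) (hI₀ : G.deg 0 * I₀ ≤ I₀) :
    (G.idealOfDegZero I₀ hI₀).restrictScalars k = I₀ ⊔ G.deg 1 * I₀ :=
  rfl

theorem isGradedIdeal_idealOfDegZero {I₀ : Submodule k A} (hI₀ : G.deg 0 * I₀ ≤ I₀)
    (hI₀_le : I₀ ≤ G.deg 0) : G.IsGradedIdeal (G.idealOfDegZero I₀ hI₀) := by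
  intro x hx
  obtain ⟨x₀, hx₀, x₁, hx₁, rfl⟩ := Submodule.mem_sup.1 hx
  exact ⟨x₀, hI₀_le hx₀, x₁, G.deg_one_mul_le hI₀_le hx₁,
    Submodule.mem_sup_left hx₀, Submodule.mem_sup_right hx₁, rfl⟩

end CommSemiring

theorem sup_deg_one_mul_inf_deg_zero {k A : Type*} [CommRing k] [CommRing A] [Algebra k A]
    (G : GradedAlgebraStruct k A) {I₀ : Submodule k A} (hI₀_le : I₀ ≤ G.deg 0) :
    (I₀ ⊔ G.deg 1 * I₀) ⊓ G.deg 0 = I₀ := by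
  have hodd_inf : G.deg 1 * I₀ ⊓ G.deg 0 = ⊥ :=
    eq_bot_iff.2 <| G.isCompl_deg.disjoint.symm.le_bot.trans' <|
      inf_le_inf_right _ (G.deg_one_mul_le hI₀_le)
  rw [sup_inf_assoc_of_le _ hI₀_le, hodd_inf, sup_bot_eq]

end GradedAlgebraStruct

theorem GradedInvAlgebraStruct.mem_idealOfDegZero_iff_τ_mem {k A : Type*} [CommSemiring k]
    [CommRing A] [Algebra k A] (G : GradedInvAlgebraStruct k A) {I₀ : Submodule k A}
    (hI₀ : G.deg 0 * I₀ ≤ I₀) (hτ : ∀ x ∈ I₀, G.τ x ∈ I₀) (x : A) :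
    x ∈ G.idealOfDegZero I₀ hI₀ ↔ G.τ x ∈ G.idealOfDegZero I₀ hI₀ := by
  let τ : A →ₗ[k] A := (G.τ : A →ₐ[k] A).toLinearMap
  have hτ_odd : (G.deg 1).map τ ≤ G.deg 1 := Submodule.map_le_iff_le_comap.2 (G.τ_deg 1)
  have hτ_I₀ : I₀.map τ ≤ I₀ := Submodule.map_le_iff_le_comap.2 hτ
  have hτ_le : (I₀ ⊔ G.deg 1 * I₀).map τ ≤ I₀ ⊔ G.deg 1 * I₀ := by
    rw [Submodule.map_sup, Submodule.map_mul]
    exact sup_le_sup hτ_I₀ (mul_le_mul' hτ_odd hτ_I₀)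
  have hτ_mem : ∀ y ∈ I₀ ⊔ G.deg 1 * I₀, G.τ y ∈ I₀ ⊔ G.deg 1 * I₀ :=
    fun y hy ↦ hτ_le (Submodule.mem_map_of_mem hy)
  exact ⟨hτ_mem x, fun hx ↦ (G.τ_invol x ▸ hτ_mem _ hx : x ∈ I₀ ⊔ G.deg 1 * I₀)⟩

theorem degree_zero_part_of_simple_gradedInvAlgebra_is_simple_general
    {k A : Type*} [Field k]
    [CommRing A] [Algebra k A]
    (G : GradedInvAlgebraStruct k A) (hs : G.IsSimple) :
    G.deg 0 ≠ ⊥ ∧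
    ∀ I₀ : Submodule k A, I₀ ≤ G.deg 0 →
      (∀ a ∈ G.deg 0, ∀ x ∈ I₀, a * x ∈ I₀) →
      (∀ x : A, x ∈ I₀ ↔ G.τ x ∈ I₀) →
      I₀ = ⊥ ∨ I₀ = G.deg 0 := by
  obtain ⟨hA, hsimple⟩ := hs
  refine ⟨fun h ↦ one_ne_zero ((Submodule.mem_bot k).1 (h ▸ G.one_mem)), ?_⟩
  intro I₀ hI₀_le hI₀_mul hI₀_τ
  have hI₀ : G.deg 0 * I₀ ≤ I₀ := Submodule.mul_le.2 hI₀_mul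
  have hI₀_eq : I₀ = (G.idealOfDegZero I₀ hI₀).restrictScalars k ⊓ G.deg 0 := by
    rw [G.restrictScalars_idealOfDegZero, G.sup_deg_one_mul_inf_deg_zero hI₀_le]
  rcases hsimple _ (G.isGradedIdeal_idealOfDegZero hI₀ hI₀_le)
      (G.mem_idealOfDegZero_iff_τ_mem hI₀ fun x ↦ (hI₀_τ x).1) with h | h
  · left
    rw [hI₀_eq, h, Submodule.restrictScalars_bot, bot_inf_eq]
  · right
    rw [hI₀_eq, h, Submodule.restrictScalars_top, top_inf_eq]

theorem degree_zero_part_of_simple_gradedInvAlgebra_is_simple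
    {k A : Type*} [Field k] [CharZero k]
    [CommRing A] [Algebra k A] [FiniteDimensional k A] [IsSemisimpleRing A]
    (G : GradedInvAlgebraStruct k A) (hs : G.IsSimple) :
    G.deg 0 ≠ ⊥ ∧
    ∀ I₀ : Submodule k A, I₀ ≤ G.deg 0 →
      (∀ a ∈ G.deg 0, ∀ x ∈ I₀, a * x ∈ I₀) →
      (∀ x : A, x ∈ I₀ ↔ G.τ x ∈ I₀) →
      I₀ = ⊥ ∨ I₀ = G.deg 0 :=
  degree_zero_part_of_simple_gradedInvAlgebra_is_simple_general G hs
end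

section
/- Let k be a field of characteristic zero, A = A₀ ⊕ A₁ a graded involutive algebra over k with involution τ, and E = E₀ ⊕ E₁ a graded Hermitian A-module with form ⟨·,·⟩_E : E × E → A. Let ε : E → E be the k-linear grading involution (identity on E₀, −identity on E₁). Let B be a commutative k-subalgebra of End_A(E) containing the scalar action of A, such that B = B₀ ⊕ B₁ where Bᵢ := {b ∈ B : b(Eⱼ) ⊆ E_{i+j} for all j ∈ ℤ/2ℤ}, and such that the trace form (b, b') ↦ tr_{B/k}(b·b') on B is non-degenerate, where tr_{B/k}(x) denotes the trace of the k-linear map y ↦ x·y on B (and tr_{A/k} is defined analogously on A). Suppose h : E × E → B is a map satisfying tr_{B/k}(b · h(u,v)) = tr_{A/k}(⟨b(u), v⟩_E) for all b ∈ B and u, v ∈ E. Then h(u, v) ∈ B_{i+j} whenever u ∈ Eᵢ and v ∈ Eⱼ. -/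
set_option synthInstance.maxHeartbeats 400000
set_option maxHeartbeats 1000000

/-- A graded Hermitian `A`-module: a graded `A`-module together with a
non-degenerate `k`-bilinear Hermitian form `E × E → A` compatible with the
gradings. -/
structure GradedHermitianModuleStruct (k A : Type*) [CommSemiring k] [CommRing A] [Algebra k A]
    (G : GradedInvAlgebraStruct k A)
    (E : Type*) [AddCommGroup E] [Module A E] [Module k E] [IsScalarTower k A E] where
  deg : ZMod 2 → Submodule k E
  smul_mem : ∀ i j : ZMod 2, ∀ a ∈ G.deg i, ∀ e ∈ deg j, a • e ∈ deg (i + j)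
  isCompl_deg : IsCompl (deg 0) (deg 1)
  form : E →ₗ[k] E →ₗ[k] A
  form_symm : ∀ u v : E, form u v = G.τ (form v u)
  form_smul : ∀ (a : A) (u v : E), form (a • u) v = a * form u v
  form_nondegen : ∀ u : E, (∀ v : E, form u v = 0) → u = 0
  form_deg : ∀ i j : ZMod 2, ∀ u ∈ deg i, ∀ v ∈ deg j, form u v ∈ G.deg (i + j)

/-!
An endomorphism that swaps two complementary subspaces has trace zero; hence left multiplication
by an odd element of `A` or of `B` has trace zero. Put `s = i + j` and let `y ∈ B_{s+1}`. Then
`tr_B(y · h(u,v)) = tr_A(⟨y u, v⟩)` vanishes because `⟨y u, v⟩` is odd, and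
`tr_B(y · h(u,v)_s)` vanishes because `y · h(u,v)_s` is odd. The `B_{s+1}`-component of
`h(u,v)` is thus trace-orthogonal to `B_{s+1}`, and, being odd against `B_s`, to all of `B`;
by non-degeneracy it vanishes.
-/

namespace LinearMap

theorem trace_eq_zero_of_mapsTo_swap {R M : Type*} [CommRing R] [AddCommGroup M] [Module R M]
    {p q : Submodule R M} (hpq : IsCompl p q) (f : M →ₗ[R] M)
    (hp : ∀ x ∈ p, f x ∈ q) (hq : ∀ x ∈ q, f x ∈ p) : trace R M f = 0 := by
  have sandwich : ∀ {p q : Submodule R M} (hpq : IsCompl p q), (∀ x ∈ p, f x ∈ q) →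
      p.projection q hpq * f * p.projection q hpq = 0 := fun hpq hp ↦ ext fun x ↦
    Submodule.projection_apply_of_mem_right hpq (hp _ (Submodule.projection_apply_mem hpq x))
  have trace_eq : ∀ {p q : Submodule R M} (hpq : IsCompl p q),
      trace R M (f * p.projection q hpq) =
        trace R M (p.projection q hpq * f * p.projection q hpq) := by
    intro p q hpq
    conv_lhs => rw [← (Submodule.isIdempotentElem_projection hpq).eq]
    rw [← mul_assoc, trace_mul_comm, ← mul_assoc]
  calc trace R M f
      = trace R M (f * p.projection q hpq) + trace R M (f * q.projection p hpq.symm) := by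
        rw [← map_add, ← mul_add, Submodule.projection_add_projection_eq_id]; rfl
    _ = 0 := by rw [trace_eq, trace_eq, sandwich hpq hp, sandwich hpq.symm hq, map_zero, add_zero]

end LinearMap

theorem ZMod.isCompl_add_one {α : Type*} [Lattice α] [BoundedOrder α] {d : ZMod 2 → α}
    (h : IsCompl (d 0) (d 1)) (s : ZMod 2) : IsCompl (d s) (d (s + 1)) := by
  fin_cases s
  exacts [h, h.symm]

/-- `Algebra.trace` is only defined for commutative algebras, and `B` need not be one. -/
noncomputable def leftMulTrace (k R : Type*) [CommRing k] [Ring R] [Algebra k R] : R →ₗ[k] k :=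
  LinearMap.trace k R ∘ₗ (Algebra.lmul k R).toLinearMap

section GradedTrace

variable {k R : Type*} [CommRing k] [Ring R] [Algebra k R] {deg : ZMod 2 → Submodule k R}

theorem leftMulTrace_mul_comm (a b : R) : leftMulTrace k R (a * b) = leftMulTrace k R (b * a) := by
  simp only [leftMulTrace, LinearMap.comp_apply, AlgHom.toLinearMap_apply, map_mul]
  exact LinearMap.trace_mul_comm k _ _

theorem leftMulTrace_eq_zero_of_mem_deg_one (hcompl : IsCompl (deg 0) (deg 1))
    (hmul : ∀ {p q : ZMod 2} {x y : R}, x ∈ deg p → y ∈ deg q → x * y ∈ deg (p + q))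
    {a : R} (ha : a ∈ deg 1) : leftMulTrace k R a = 0 :=
  LinearMap.trace_eq_zero_of_mapsTo_swap hcompl _
    (fun _ hx ↦ add_zero (1 : ZMod 2) ▸ hmul ha hx)
    (fun _ hx ↦ (show (1 + 1 : ZMod 2) = 0 from rfl) ▸ hmul ha hx)

theorem mem_deg_of_leftMulTrace_mul_eq_zero (hcompl : IsCompl (deg 0) (deg 1))
    (hmul : ∀ {p q : ZMod 2} {x y : R}, x ∈ deg p → y ∈ deg q → x * y ∈ deg (p + q))
    (hnondeg : ∀ x : R, (∀ y, leftMulTrace k R (x * y) = 0) → x = 0) {s : ZMod 2} {x : R}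
    (horth : ∀ y ∈ deg (s + 1), leftMulTrace k R (y * x) = 0) : x ∈ deg s := by
  have odd : ∀ {p q : ZMod 2} {a b : R}, p + q = 1 → a ∈ deg p → b ∈ deg q →
      leftMulTrace k R (a * b) = 0 :=
    fun hpq ha hb ↦ leftMulTrace_eq_zero_of_mem_deg_one hcompl hmul (hpq ▸ hmul ha hb)
  have hsplit :=
    Submodule.codisjoint_iff_exists_add_eq.mp (ZMod.isCompl_add_one hcompl s).codisjoint
  obtain ⟨x₀, x₁, hx₀, hx₁, rfl⟩ := hsplit x
  suffices x₁ = 0 by rwa [this, add_zero]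
  refine hnondeg x₁ fun y ↦ ?_
  obtain ⟨y₀, y₁, hy₀, hy₁, rfl⟩ := hsplit y
  have h₁₁ : leftMulTrace k R (x₁ * y₁) = 0 := by
    rw [leftMulTrace_mul_comm, ← add_sub_cancel_left (y₁ * x₀) (y₁ * x₁), ← mul_add,
      map_sub, horth y₁ hy₁, odd (by grind) hy₁ hx₀, sub_zero]
  rw [mul_add, map_add, odd (by grind) hx₁ hy₀, h₁₁, add_zero]

end GradedTrace

namespace GradedHermitianModuleStruct

variable {k A E : Type*} [CommRing k] [CommRing A] [Algebra k A]
  [AddCommGroup E] [Module A E] [Module k E] [IsScalarTower k A E]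
  {G : GradedInvAlgebraStruct k A} (M : GradedHermitianModuleStruct k A G E)
  (B : Subalgebra k (Module.End A E))

def endDeg (p : ZMod 2) : Submodule k B where
  carrier := {b | ∀ j, ∀ e ∈ M.deg j, (b : Module.End A E) e ∈ M.deg (p + j)}
  add_mem' hx hy j e he := add_mem (hx j e he) (hy j e he)
  zero_mem' _ _ _ := zero_mem _
  smul_mem' r _ hx j e he := Submodule.smul_mem _ r (hx j e he)

theorem disjoint_endDeg : Disjoint (M.endDeg B 0) (M.endDeg B 1) := by
  refine Submodule.disjoint_def.mpr fun b h₀ h₁ ↦ ?_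
  have hvanish : ∀ j, ∀ e ∈ M.deg j, (b : Module.End A E) e = 0 := fun j e he ↦
    Submodule.disjoint_def.mp (ZMod.isCompl_add_one M.isCompl_deg j).disjoint _
      (zero_add j ▸ h₀ j e he) (add_comm 1 j ▸ h₁ j e he)
  ext e
  obtain ⟨e₀, e₁, he₀, he₁, rfl⟩ :=
    Submodule.codisjoint_iff_exists_add_eq.mp M.isCompl_deg.codisjoint e
  simp [hvanish 0 e₀ he₀, hvanish 1 e₁ he₁]

variable {M B}

theorem endDeg_mul {p q : ZMod 2} {x y : B} (hx : x ∈ M.endDeg B p) (hy : y ∈ M.endDeg B q) :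
    x * y ∈ M.endDeg B (p + q) := fun j e he ↦ by
  rw [add_assoc]
  exact hx _ _ (hy j e he)

theorem isCompl_endDeg (hdecomp : ∀ b : B, ∃ b₀ b₁ : B, b = b₀ + b₁ ∧
      b₀ ∈ M.endDeg B 0 ∧ b₁ ∈ M.endDeg B 1) :
    IsCompl (M.endDeg B 0) (M.endDeg B 1) :=
  ⟨M.disjoint_endDeg B, Submodule.codisjoint_iff_exists_add_eq.mpr fun b ↦
    let ⟨b₀, b₁, hb, h₀, h₁⟩ := hdecomp b; ⟨b₀, b₁, h₀, h₁, hb.symm⟩⟩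

end GradedHermitianModuleStruct

theorem hermitian_descent_form_respects_grading_general
    {k A E : Type*} [Field k]
    [CommRing A] [Algebra k A]
    [AddCommGroup E] [Module A E] [Module k E] [IsScalarTower k A E]
    (G : GradedInvAlgebraStruct k A)
    (M : GradedHermitianModuleStruct k A G E)
    (B : Subalgebra k (Module.End A E))
    (hBdecomp : ∀ b : ↥B, ∃ b₀ b₁ : ↥B, b = b₀ + b₁ ∧
      (∀ j : ZMod 2, ∀ e ∈ M.deg j, (b₀ : Module.End A E) e ∈ M.deg (0 + j)) ∧
      (∀ j : ZMod 2, ∀ e ∈ M.deg j, (b₁ : Module.End A E) e ∈ M.deg (1 + j)))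
    (hBtrace : ∀ x : ↥B,
      (∀ y : ↥B, LinearMap.trace k ↥B (LinearMap.mulLeft k (x * y)) = 0) → x = 0)
    (h : E × E → ↥B)
    (hh : ∀ (b : ↥B) (u v : E),
      LinearMap.trace k ↥B (LinearMap.mulLeft k (b * h (u, v))) =
        LinearMap.trace k A (LinearMap.mulLeft k (M.form ((b : Module.End A E) u) v))) :
    ∀ i j : ZMod 2, ∀ u ∈ M.deg i, ∀ v ∈ M.deg j,
      ∀ j' : ZMod 2, ∀ e ∈ M.deg j',
        (((h (u, v) : Module.End A E)) e) ∈ M.deg ((i + j) + j') := by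
  intro i j u hu v hv
  refine mem_deg_of_leftMulTrace_mul_eq_zero (M.isCompl_endDeg hBdecomp) M.endDeg_mul hBtrace
    fun y hy ↦ (hh y u v).trans <|
      leftMulTrace_eq_zero_of_mem_deg_one G.isCompl_deg (G.mul_mem _ _ _ · _ ·) ?_
  have hform := M.form_deg _ j _ (hy i u hu) v hv
  rwa [show i + j + 1 + i + j = 1 by grind] at hform

theorem hermitian_descent_form_respects_grading
    {k A E : Type*} [Field k] [CharZero k]
    [CommRing A] [Algebra k A] [FiniteDimensional k A] [IsSemisimpleRing A]
    [AddCommGroup E] [Module A E] [Module k E] [IsScalarTower k A E] [Module.Finite A E]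
    (G : GradedInvAlgebraStruct k A)
    (M : GradedHermitianModuleStruct k A G E)
    (B : Subalgebra k (Module.End A E))
    (hBcomm : ∀ x y : ↥B, x * y = y * x)
    (hBscalar : ∀ a : A, algebraMap A (Module.End A E) a ∈ B)
    (hBdecomp : ∀ b : ↥B, ∃ b₀ b₁ : ↥B, b = b₀ + b₁ ∧
      (∀ j : ZMod 2, ∀ e ∈ M.deg j, (b₀ : Module.End A E) e ∈ M.deg (0 + j)) ∧
      (∀ j : ZMod 2, ∀ e ∈ M.deg j, (b₁ : Module.End A E) e ∈ M.deg (1 + j)))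
    (hBdisj : ∀ b : ↥B,
      (∀ j : ZMod 2, ∀ e ∈ M.deg j, (b : Module.End A E) e ∈ M.deg (0 + j)) →
      (∀ j : ZMod 2, ∀ e ∈ M.deg j, (b : Module.End A E) e ∈ M.deg (1 + j)) → b = 0)
    (hBtrace : ∀ x : ↥B,
      (∀ y : ↥B, LinearMap.trace k ↥B (LinearMap.mulLeft k (x * y)) = 0) → x = 0)
    (h : E × E → ↥B)
    (hh : ∀ (b : ↥B) (u v : E),
      LinearMap.trace k ↥B (LinearMap.mulLeft k (b * h (u, v))) =
        LinearMap.trace k A (LinearMap.mulLeft k (M.form ((b : Module.End A E) u) v))) :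
    ∀ i j : ZMod 2, ∀ u ∈ M.deg i, ∀ v ∈ M.deg j,
      ∀ j' : ZMod 2, ∀ e ∈ M.deg j',
        (((h (u, v) : Module.End A E)) e) ∈ M.deg ((i + j) + j') :=
  hermitian_descent_form_respects_grading_general G M B hBdecomp hBtrace h hh
end

section
/- Let λ, λ' be non-negative integers and ω, ω' ∈ {0, 1}. Define the integer m := Σ_{l=0}^{min(λ,λ')} c_l · (λ + λ' − 2l + 2) − (λ+1)(λ'+1), where c_l := (1 if λ' + ω + ω' + l is odd, else 0) + (1 if λ + ω + ω' + l is odd, else 0). Then: m = min(λ,λ') + 1 if λ ≢ λ' (mod 2); m = 2·min(λ,λ') + 2 if λ and λ' are both odd and ω = ω'; m = 0 if λ and λ' are both odd and ω ≠ ω'; m = −|λ − λ'| − 1 if λ and λ' are both even and ω = ω'; and m = λ + λ' + 3 if λ and λ' are both even and ω ≠ ω'. -/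
/-!
Writing `[k odd] = (1 - (-1)^k) / 2`, the weight `c_l` becomes `1 - ε (-1)^l` with
`ε = ((-1)^λ + (-1)^λ') (-1)^(ω+ω') / 2 ∈ {-1, 0, 1}`. So the sum splits into the arithmetic
series `∑ (C - 2l) = (n+1)(C - n)` and `ε` times the alternating series `∑ (-1)^l (C - 2l)`,
which is `C - n` for even `n` and `n + 1` for odd `n` (here `n = min λ λ'`, `C = λ + λ' + 2`).
Together with `min λ λ' * max λ λ' = λ λ'` this gives all five values at once.
-/

open Finset

lemma two_mul_ite_odd (k : ℕ) : 2 * (if Odd k then 1 else 0 : ℤ) = 1 - (-1) ^ k := by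
  rcases Nat.even_or_odd k with hk | hk
  · simp [hk.neg_one_pow, Nat.not_odd_iff_even.mpr hk]
  · simp [hk.neg_one_pow, hk]

lemma neg_one_pow_add_neg_one_pow_of_mod_two_ne {a b : ℕ} (h : a % 2 ≠ b % 2) :
    (-1 : ℤ) ^ a + (-1) ^ b = 0 := by
  rw [neg_one_pow_eq_pow_mod_two, neg_one_pow_eq_pow_mod_two (n := b)]
  rcases Nat.mod_two_eq_zero_or_one a with ha | ha <;>
    rcases Nat.mod_two_eq_zero_or_one b with hb | hb <;> simp [ha, hb] at h ⊢

lemma odd_add_of_ne_of_zero_or_one {a b : ℕ} (ha : a = 0 ∨ a = 1) (hb : b = 0 ∨ b = 1)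
    (h : a ≠ b) : Odd (a + b) :=
  Nat.odd_iff.mpr (by omega)

lemma sum_range_sub_two_mul (C : ℤ) (n : ℕ) :
    ∑ l ∈ range (n + 1), (C - 2 * l) = (n + 1) * (C - n) := by
  induction n with
  | zero => simp
  | succ n ih => rw [sum_range_succ, ih]; push_cast; ring

lemma sum_range_neg_one_pow_mul_sub_two_mul (C : ℤ) (n : ℕ) :
    ∑ l ∈ range (n + 1), (-1) ^ l * (C - 2 * l) = if Even n then C - n else n + 1 := by
  induction n with
  | zero => simp
  | succ n ih =>
    rw [sum_range_succ, ih, pow_succ]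
    rcases Nat.even_or_odd n with hn | hn
    · simp only [hn, hn.neg_one_pow, if_true, Nat.even_add_one, not_true, if_false]
      push_cast; ring
    · simp only [Nat.not_even_iff_odd.mpr hn, hn.neg_one_pow, if_false, Nat.even_add_one,
        not_false_eq_true, if_true]
      push_cast; ring

lemma two_mul_sum_range_ite_odd_add_ite_odd (a b n : ℕ) (C : ℤ) :
    2 * ∑ l ∈ range (n + 1),
        ((if Odd (a + l) then 1 else 0) + (if Odd (b + l) then 1 else 0) : ℤ) * (C - 2 * l) =
      2 * ((n + 1) * (C - n)) - ((-1) ^ a + (-1) ^ b) * (if Even n then C - n else n + 1) := by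
  rw [← sum_range_sub_two_mul, ← sum_range_neg_one_pow_mul_sub_two_mul, mul_sum,
    mul_sum, mul_sum, ← sum_sub_distrib]
  refine sum_congr rfl fun l _ => ?_
  have ha := two_mul_ite_odd (a + l)
  have hb := two_mul_ite_odd (b + l)
  rw [pow_add] at ha hb
  linear_combination (C - 2 * l) * (ha + hb)

theorem comten_identity (lam lam' ω ω' : ℕ) (hω : ω = 0 ∨ ω = 1) (hω' : ω' = 0 ∨ ω' = 1)
    (m : ℤ)
    (hm : m = (∑ l ∈ Finset.range (min lam lam' + 1),
        (((if Odd (lam' + ω + ω' + l) then 1 else 0) +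
          (if Odd (lam + ω + ω' + l) then 1 else 0) : ℤ)) *
          ((lam : ℤ) + (lam' : ℤ) - 2 * l + 2)) -
      ((lam : ℤ) + 1) * ((lam' : ℤ) + 1)) :
    (lam % 2 ≠ lam' % 2 → m = (min lam lam' : ℤ) + 1) ∧
    (Odd lam → Odd lam' → ω = ω' → m = 2 * (min lam lam' : ℤ) + 2) ∧
    (Odd lam → Odd lam' → ω ≠ ω' → m = 0) ∧
    (Even lam → Even lam' → ω = ω' → m = -|(lam : ℤ) - (lam' : ℤ)| - 1) ∧
    (Even lam → Even lam' → ω ≠ ω' → m = (lam : ℤ) + (lam' : ℤ) + 3) := by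
  rw [← max_sub_min_eq_abs', ← Nat.cast_min, ← Nat.cast_max]
  set n := min lam lam'
  set M := max lam lam'
  have hsum : (n : ℤ) + M = lam + lam' := by exact_mod_cast min_add_max lam lam'
  have hprod : (n : ℤ) * M = lam * lam' := by exact_mod_cast min_mul_max lam lam'
  have hsign : (-1 : ℤ) ^ (lam' + ω + ω') + (-1) ^ (lam + ω + ω') =
      ((-1) ^ lam + (-1) ^ lam') * (-1) ^ (ω + ω') := by ring
  have key := two_mul_sum_range_ite_odd_add_ite_odd (lam' + ω + ω') (lam + ω + ω') n (n + M + 2)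
  rw [hsign] at key
  rw [← hsum] at hm
  simp only [sub_add_eq_add_sub] at hm
  have heven (he : ω = ω') : Even (ω + ω') := he ▸ Even.add_self ω'
  have hodd (hne : ω ≠ ω') : Odd (ω + ω') := odd_add_of_ne_of_zero_or_one hω hω' hne
  refine ⟨fun hne => ?_, fun hl hl' hωω => ?_, fun hl hl' hωω => ?_, fun hl hl' hωω => ?_,
    fun hl hl' hωω => ?_⟩
  · rw [neg_one_pow_add_neg_one_pow_of_mod_two_ne hne] at key
    linarith
  · rw [hl.neg_one_pow, hl'.neg_one_pow, (heven hωω).neg_one_pow,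
      if_neg (Nat.not_even_iff_odd.mpr (min_rec' Odd hl hl'))] at key
    linarith
  · rw [hl.neg_one_pow, hl'.neg_one_pow, (hodd hωω).neg_one_pow,
      if_neg (Nat.not_even_iff_odd.mpr (min_rec' Odd hl hl'))] at key
    linarith
  · rw [hl.neg_one_pow, hl'.neg_one_pow, (heven hωω).neg_one_pow,
      if_pos (min_rec' Even hl hl')] at key
    linarith
  · rw [hl.neg_one_pow, hl'.neg_one_pow, (hodd hωω).neg_one_pow,
      if_pos (min_rec' Even hl hl')] at key
    linarith
end

section
/- Let d be a positive integer, λ₁, …, λ_d non-negative integers and ω₁, …, ω_d ∈ {0, 1}. Let n := Σ_{i=1}^{d} #{j ∈ {0, 1, …, λᵢ} : ωᵢ + j is even}, and assume Σ_{i=1}^{d} #{j ∈ {0, 1, …, λᵢ} : ωᵢ + j is odd} = n. For each ordered pair (i, j) with 1 ≤ i, j ≤ d define T(i,j) := Σ_{l=0}^{min(λᵢ,λⱼ)} (λᵢ + λⱼ − 2l + 2) · (1 if λⱼ + ωᵢ + ωⱼ + l is odd, else 0). Then 2n² < Σ_{i=1}^{d} Σ_{j=1}^{d} T(i,j) ≤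 4n². -/
/-!
Combinatorial content of Lemma `sinequ` of the paper: for a graded `sl₂`-module
`V = ⊕ᵢ V_{λᵢ}^{ωᵢ}` with `dim V₀ = dim V₁ = n ≥ 1`, the trace of `2 − h` on
`𝔳^f` satisfies `2n² < tr((2−h)|_{𝔳^f}) ≤ 4n²`.
-/


def ee (a w : ℕ) : ℕ := if w % 2 = 0 then a / 2 + 1 else (a + 1) / 2
def oo (a w : ℕ) : ℕ := (a + 1) - ee a w

lemma card_ev (a w : ℕ) :
    ((Finset.range (a + 1)).filter fun j => Even (w + j)).card = ee a w := by
  induction a with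
  | zero =>
    rw [show (0:ℕ)+1 = 1 from rfl, Finset.range_one]
    rcases Nat.mod_two_eq_zero_or_one w with h | h
    · rw [ee, if_pos h]
      rw [Finset.filter_singleton, if_pos (by simpa [Nat.even_iff] using h)]
      simp
    · rw [ee, if_neg (by omega)]
      rw [Finset.filter_singleton, if_neg (by simp [Nat.even_iff]; omega)]
      simp
  | succ a ih =>
    rw [Finset.range_add_one, Finset.filter_insert]
    have hnm : (a + 1) ∉ (Finset.range (a + 1)).filter fun j => Even (w + j) := by
      simp
    by_cases h : (w + (a+1)) % 2 = 0
    · rw [if_pos (Nat.even_iff.mpr h), Finset.card_insert_of_notMem hnm, ih]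
      unfold ee
      split_ifs with h2 <;> omega
    · rw [if_neg (by simp [Nat.even_iff]; omega), ih]
      unfold ee
      split_ifs with h2 <;> omega

lemma card_od (a w : ℕ) :
    ((Finset.range (a + 1)).filter fun j => ¬ Even (w + j)).card = oo a w := by
  have h := Finset.card_filter_add_card_filter_not (s := Finset.range (a+1))
      (p := fun j => Even (w + j))
  rw [card_ev] at h
  have hee : ee a w ≤ a + 1 := by unfold ee; split_ifs <;> omega
  simp only [Finset.card_range] at h
  unfold oo
  omega


noncomputable def cfo (N m : ℕ) : ℤ := ((m / 2 + 1 : ℕ) : ℤ) * ((N : ℤ) + 4 - 2 * ((m / 2 + 1 : ℕ) : ℤ))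
noncomputable def cfe (N m : ℕ) : ℤ := (((m + 1) / 2 : ℕ) : ℤ) * ((N : ℤ) + 2 - 2 * (((m + 1) / 2 : ℕ) : ℤ))

lemma key (m N c : ℕ) :
    (∑ l ∈ Finset.range (m + 1), if Odd (c + l) then (N : ℤ) - 2 * l + 2 else 0)
      = if c % 2 = 1 then cfo N m else cfe N m := by
  induction m with
  | zero =>
    rw [Finset.sum_range_one]
    rcases Nat.mod_two_eq_zero_or_one c with h | h
    · rw [if_neg (by simp [Nat.odd_iff, h]), if_neg (show ¬ c % 2 = 1 by omega)]
      unfold cfe; norm_num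
    · rw [if_pos (by simp [Nat.odd_iff, h]), if_pos h]
      unfold cfo; push_cast; ring
  | succ m ih =>
    rw [Finset.sum_range_succ, ih]
    rcases Nat.mod_two_eq_zero_or_one c with hc | hc <;>
      rcases Nat.mod_two_eq_zero_or_one m with hm | hm
    · -- c even, m even : new index l = m+1 is odd, c+(m+1) odd : term included
      rw [if_neg (show ¬ c % 2 = 1 by omega), if_neg (show ¬ c % 2 = 1 by omega),
        if_pos (show Odd (c + (m+1)) by rw [Nat.odd_iff]; omega)]
      unfold cfe
      have hB : (((m + 1 + 1) / 2 : ℕ) : ℤ) = (((m + 1) / 2 : ℕ) : ℤ) + 1 := by omega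
      have hC : ((m + 1 : ℕ) : ℤ) = 2 * (((m + 1) / 2 : ℕ) : ℤ) + 1 := by omega
      rw [hB, hC]; ring
    · -- c even, m odd : no new term
      rw [if_neg (show ¬ c % 2 = 1 by omega), if_neg (show ¬ c % 2 = 1 by omega),
        if_neg (show ¬ Odd (c + (m+1)) by simp [Nat.odd_iff]; omega)]
      unfold cfe
      have hB : (((m + 1 + 1) / 2 : ℕ) : ℤ) = (((m + 1) / 2 : ℕ) : ℤ) := by omega
      rw [hB]; ring
    · -- c odd, m even : no new term
      rw [if_pos hc, if_pos hc,
        if_neg (show ¬ Odd (c + (m+1)) by simp [Nat.odd_iff]; omega)]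
      unfold cfo
      have hB : (((m + 1) / 2 + 1 : ℕ) : ℤ) = ((m / 2 + 1 : ℕ) : ℤ) := by omega
      rw [hB]; ring
    · -- c odd, m odd : term included
      rw [if_pos hc, if_pos hc,
        if_pos (show Odd (c + (m+1)) by rw [Nat.odd_iff]; omega)]
      unfold cfo
      have hB : (((m + 1) / 2 + 1 : ℕ) : ℤ) = ((m / 2 + 1 : ℕ) : ℤ) + 1 := by omega
      have hC : ((m + 1 : ℕ) : ℤ) = 2 * ((m / 2 + 1 : ℕ) : ℤ) := by omega
      rw [hB, hC]; ring


noncomputable def cf (a oa b ob : ℕ) : ℤ :=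
  if (b + oa + ob) % 2 = 1 then cfo (a + b) (min a b) else cfe (a + b) (min a b)
def ep (a : ℕ) : ℤ := if a % 2 = 0 then 1 else 0

lemma d1 (α : ℕ) : (α + α) / 2 = α := by omega
lemma d2 (α : ℕ) : (α + α + 1) / 2 = α := by omega
lemma d3 (α : ℕ) : (2 * α + 1) / 2 = α := by omega
lemma d4 (α : ℕ) : (2 * α + 1 + 1) / 2 = α + 1 := by omega
lemma s1 (α : ℕ) : α + α + 1 - (α + 1) = α := by omega
lemma s2 (α : ℕ) : 2 * α + 1 + 1 - (α + 1) = α + 1 := by omega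
lemma s3 (α : ℕ) : α + α + 1 - α = α + 1 := by omega

set_option maxHeartbeats 1000000 in
lemma U' (a b oa ob : ℕ) (hab : a ≤ b) (ha : oa ≤ 1) (hb : ob ≤ 1) :
    cf a oa b ob + cf b ob a oa
      ≤ 4 * ((ee a oa : ℤ) * (oo b ob : ℤ) + (oo a oa : ℤ) * (ee b ob : ℤ)) := by
  unfold cf cfo cfe oo ee
  rw [min_eq_left hab, min_eq_right hab]
  interval_cases oa <;> interval_cases ob <;>
    rcases Nat.even_or_odd a with ⟨α, rfl⟩ | ⟨α, rfl⟩ <;>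
    rcases Nat.even_or_odd b with ⟨β, rfl⟩ | ⟨β, rfl⟩ <;>
    split_ifs <;>
    first
      | omega
      | exact (‹False›).elim
      | (simp only [d1, d2, d3, d4, s1, s2, s3]
         push_cast
         nlinarith [hab, mul_nonneg (Nat.cast_nonneg' (α := ℤ) α) (Nat.cast_nonneg' (α := ℤ) β),
           sq_nonneg ((α : ℤ) - β), sq_nonneg ((α : ℤ) + 1 - β)])

set_option maxHeartbeats 1600000 in
lemma L' (a b oa ob : ℕ) (hab : a ≤ b) (ha : oa ≤ 1) (hb : ob ≤ 1) :
    2 * ((ee a oa : ℤ) * (oo b ob : ℤ) + (oo a oa : ℤ) * (ee b ob : ℤ))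
      - ((ee a oa : ℤ) - (oo a oa : ℤ)) * ((ee b ob : ℤ) - (oo b ob : ℤ)) * ((a : ℤ) + (b : ℤ) + 1)
      + ep a * ep b
      ≤ cf a oa b ob + cf b ob a oa := by
  unfold cf cfo cfe oo ee ep
  rw [min_eq_left hab, min_eq_right hab]
  interval_cases oa <;> interval_cases ob <;>
    rcases Nat.even_or_odd a with ⟨α, rfl⟩ | ⟨α, rfl⟩ <;>
    rcases Nat.even_or_odd b with ⟨β, rfl⟩ | ⟨β, rfl⟩ <;>
    split_ifs <;>
    first
      | omega
      | exact (‹False›).elim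
      | (simp only [d1, d2, d3, d4, s1, s2, s3]
         push_cast
         nlinarith [hab, mul_nonneg (Nat.cast_nonneg' (α := ℤ) α) (Nat.cast_nonneg' (α := ℤ) β),
           sq_nonneg ((α : ℤ) - β), sq_nonneg ((α : ℤ) + 1 - β)])

set_option maxHeartbeats 800000 in
lemma D' (a oa : ℕ) (ha : oa ≤ 1) :
    4 * ((ee a oa : ℤ) * (oo a oa : ℤ))
      - ((ee a oa : ℤ) - (oo a oa : ℤ)) * ((ee a oa : ℤ) - (oo a oa : ℤ)) * ((a : ℤ) + (a : ℤ) + 1)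
      + ep a * ep a + 2 * (1 - ep a) * ((a : ℤ) + 1)
      ≤ cf a oa a oa + cf a oa a oa := by
  unfold cf cfo cfe oo ee ep
  rw [min_self]
  interval_cases oa <;>
    rcases Nat.even_or_odd a with ⟨α, rfl⟩ | ⟨α, rfl⟩ <;>
    split_ifs <;>
    first
      | omega
      | exact (‹False›).elim
      | (simp only [d1, d2, d3, d4, s1, s2, s3]
         push_cast
         nlinarith [mul_nonneg (Nat.cast_nonneg' (α := ℤ) α) (Nat.cast_nonneg' (α := ℤ) α),
           sq_nonneg ((α : ℤ))])


set_option linter.unusedSectionVars false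

section helpers
variable {ι : Type*} [Fintype ι] [DecidableEq ι]

lemma Usum (F O : ι → ℤ) :
    ∑ i, ∑ j, (4 * (F i * O j + O i * F j))
      = 4 * ((∑ i, F i) * (∑ i, O i) + (∑ i, O i) * (∑ i, F i)) := by
  have h1 : ∀ f g : ι → ℤ, ∑ i, ∑ j, f i * g j = (∑ i, f i) * (∑ j, g j) :=
    fun f g => (Fintype.sum_mul_sum f g).symm
  have e : ∀ i j : ι, 4 * (F i * O j + O i * F j)
      = (4 * F i) * O j + (4 * O i) * F j := fun i j => by ring
  calc ∑ i, ∑ j, (4 * (F i * O j + O i * F j))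
      = ∑ i, ∑ j, ((4 * F i) * O j + (4 * O i) * F j) := by
        exact Finset.sum_congr rfl fun i _ => Finset.sum_congr rfl fun j _ => e i j
    _ = (∑ i, ∑ j, (4 * F i) * O j) + (∑ i, ∑ j, (4 * O i) * F j) := by
        rw [← Finset.sum_add_distrib]
        exact Finset.sum_congr rfl fun i _ => by rw [← Finset.sum_add_distrib]
    _ = (∑ i, 4 * F i) * (∑ j, O j) + (∑ i, 4 * O i) * (∑ j, F j) := by
        rw [h1, h1]
    _ = _ := by rw [Finset.sum_congr rfl fun (i : ι) _ => rfl]; rw [← Finset.mul_sum, ← Finset.mul_sum]; ring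

lemma Bsum (F O L eps : ι → ℤ) (hδ : ∑ i, (F i - O i) = 0) :
    ∑ i, ∑ j, (2 * (F i * O j + O i * F j)
        - (F i - O i) * (F j - O j) * (L i + L j + 1) + eps i * eps j
        + (if i = j then 2 * (1 - eps i) * (L i + 1) else 0))
      = 2 * ((∑ i, F i) * (∑ i, O i) + (∑ i, O i) * (∑ i, F i))
        + (∑ i, eps i) ^ 2 + ∑ i, 2 * (1 - eps i) * (L i + 1) := by
  have h1 : ∀ f g : ι → ℤ, ∑ i, ∑ j, f i * g j = (∑ i, f i) * (∑ j, g j) :=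
    fun f g => (Fintype.sum_mul_sum f g).symm
  have e : ∀ i j : ι, 2 * (F i * O j + O i * F j)
        - (F i - O i) * (F j - O j) * (L i + L j + 1) + eps i * eps j
        + (if i = j then 2 * (1 - eps i) * (L i + 1) else 0)
      = (2 * F i) * O j + (2 * O i) * F j
        - ((F i - O i) * (L i + 1)) * (F j - O j) - (F i - O i) * ((F j - O j) * L j)
        + eps i * eps j + (if i = j then 2 * (1 - eps i) * (L i + 1) else 0) :=
    fun i j => by ring
  calc ∑ i, ∑ j, (2 * (F i * O j + O i * F j)
        - (F i - O i) * (F j - O j) * (L i + L j + 1) + eps i * eps j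
        + (if i = j then 2 * (1 - eps i) * (L i + 1) else 0))
      = ∑ i, ∑ j, ((2 * F i) * O j + (2 * O i) * F j
        - ((F i - O i) * (L i + 1)) * (F j - O j) - (F i - O i) * ((F j - O j) * L j)
        + eps i * eps j + (if i = j then 2 * (1 - eps i) * (L i + 1) else 0)) := by
        exact Finset.sum_congr rfl fun i _ => Finset.sum_congr rfl fun j _ => e i j
    _ = (∑ i, ∑ j, (2 * F i) * O j) + (∑ i, ∑ j, (2 * O i) * F j)
        - (∑ i, ∑ j, ((F i - O i) * (L i + 1)) * (F j - O j))
        - (∑ i, ∑ j, (F i - O i) * ((F j - O j) * L j))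
        + (∑ i, ∑ j, eps i * eps j)
        + (∑ i, ∑ j, if i = j then 2 * (1 - eps i) * (L i + 1) else 0) := by
        simp only [Finset.sum_add_distrib, Finset.sum_sub_distrib]
    _ = (∑ i, 2 * F i) * (∑ j, O j) + (∑ i, 2 * O i) * (∑ j, F j)
        - ((∑ i, (F i - O i) * (L i + 1)) * (∑ j, (F j - O j)))
        - ((∑ i, (F i - O i)) * (∑ j, (F j - O j) * L j))
        + (∑ i, eps i) * (∑ j, eps j)
        + (∑ i, 2 * (1 - eps i) * (L i + 1)) := by
        rw [h1, h1, h1, h1, h1]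
        congr 1
        exact Finset.sum_congr rfl fun i _ => Finset.sum_ite_eq Finset.univ i _ |>.trans (by simp)
    _ = _ := by rw [hδ, ← Finset.mul_sum, ← Finset.mul_sum]; ring

end helpers


theorem sinequ_inequality (d : ℕ) (hd : 0 < d) (lam ω : Fin d → ℕ)
    (hω : ∀ i, ω i = 0 ∨ ω i = 1) (n : ℕ)
    (hn : n = ∑ i, ((Finset.range (lam i + 1)).filter fun j => Even (ω i + j)).card)
    (hodd : (∑ i, ((Finset.range (lam i + 1)).filter fun j => ¬ Even (ω i + j)).card) = n)
    (T : Fin d → Fin d → ℤ)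
    (hT : ∀ i j, T i j = ∑ l ∈ Finset.range (min (lam i) (lam j) + 1),
      if Odd (lam j + ω i + ω j + l) then (lam i : ℤ) + (lam j : ℤ) - 2 * l + 2 else 0) :
    2 * (n : ℤ) ^ 2 < (∑ i, ∑ j, T i j) ∧ (∑ i, ∑ j, T i j) ≤ 4 * (n : ℤ) ^ 2 := by
  simp only [card_ev] at hn
  simp only [card_od] at hodd
  have hω1 : ∀ i, ω i ≤ 1 := fun i => by rcases hω i with h | h <;> omega
  have hTcf : ∀ i j, T i j = cf (lam i) (ω i) (lam j) (ω j) := by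
    intro i j
    rw [hT i j]
    unfold cf
    rw [← key (min (lam i) (lam j)) (lam i + lam j) (lam j + ω i + ω j)]
    refine Finset.sum_congr rfl fun l _ => ?_
    split_ifs with h
    · push_cast; ring
    · rfl
  -- integer versions of the dimension counts
  set F : Fin d → ℤ := fun i => ((ee (lam i) (ω i) : ℕ) : ℤ) with hF
  set O : Fin d → ℤ := fun i => ((oo (lam i) (ω i) : ℕ) : ℤ) with hO
  set eps : Fin d → ℤ := fun i => ep (lam i) with heps
  have hFn : (∑ i, F i) = (n : ℤ) := by
    simp only [hF]; rw [hn]; push_cast; rfl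
  have hOn : (∑ i, O i) = (n : ℤ) := by
    simp only [hO]; rw [← hodd]; push_cast; rfl
  have hδ : ∑ i, (F i - O i) = 0 := by
    rw [Finset.sum_sub_distrib, hFn, hOn]; ring
  set S := ∑ i, ∑ j, T i j with hS
  have hswap : (∑ i, ∑ j, T j i) = S := by rw [hS]; exact Finset.sum_comm
  have h2S : ∑ i, ∑ j, (T i j + T j i) = 2 * S := by
    have h' : ∑ i, ∑ j, (T i j + T j i) = (∑ i, ∑ j, T i j) + (∑ i, ∑ j, T j i) := by
      rw [← Finset.sum_add_distrib]
      exact Finset.sum_congr rfl fun i _ => by rw [← Finset.sum_add_distrib]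
    rw [h', hswap, ← hS]; ring
  -- upper bound
  have hup : 2 * S ≤ 8 * (n : ℤ) ^ 2 := by
    rw [← h2S]
    have h1 : ∑ i, ∑ j, (T i j + T j i) ≤ ∑ i, ∑ j, (4 * (F i * O j + O i * F j)) := by
      refine Finset.sum_le_sum fun i _ => Finset.sum_le_sum fun j _ => ?_
      rw [hTcf i j, hTcf j i, hF, hO]
      rcases le_total (lam i) (lam j) with h | h
      · exact U' _ _ _ _ h (hω1 i) (hω1 j)
      · have := U' (lam j) (lam i) (ω j) (ω i) h (hω1 j) (hω1 i)
        linarith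
    rw [Usum F O, hFn, hOn] at h1
    linarith
  -- lower bound
  have hlow : 4 * (n : ℤ) ^ 2 + 1 ≤ 2 * S := by
    rw [← h2S]
    have h1 : ∑ i, ∑ j, (2 * (F i * O j + O i * F j)
          - (F i - O i) * (F j - O j) * ((lam i : ℤ) + (lam j : ℤ) + 1) + eps i * eps j
          + (if i = j then 2 * (1 - eps i) * ((lam i : ℤ) + 1) else 0))
        ≤ ∑ i, ∑ j, (T i j + T j i) := by
      refine Finset.sum_le_sum fun i _ => Finset.sum_le_sum fun j _ => ?_
      rw [hTcf i j, hTcf j i, hF, hO, heps]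
      by_cases hij : i = j
      · subst hij
        rw [if_pos rfl]
        have := D' (lam i) (ω i) (hω1 i)
        linarith
      · rw [if_neg hij]
        rcases le_total (lam i) (lam j) with h | h
        · have := L' (lam i) (lam j) (ω i) (ω j) h (hω1 i) (hω1 j)
          linarith
        · have := L' (lam j) (lam i) (ω j) (ω i) h (hω1 j) (hω1 i)
          linarith
    rw [Bsum F O (fun i => ((lam i : ℤ))) eps hδ, hFn, hOn] at h1
    have hP : 1 ≤ (∑ i, eps i) ^ 2 + ∑ i, 2 * (1 - eps i) * ((lam i : ℤ) + 1) := by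
      have hterm : ∀ i : Fin d, 0 ≤ 2 * (1 - eps i) * ((lam i : ℤ) + 1) := by
        intro i
        simp only [heps, ep]
        split_ifs <;> nlinarith [(Nat.cast_nonneg (lam i) : (0:ℤ) ≤ (lam i : ℤ))]
      by_cases hall : ∀ i, lam i % 2 = 0
      · have he1 : (∑ i, eps i) = (d : ℤ) := by
          rw [heps]
          have : ∀ i : Fin d, ep (lam i) = 1 := fun i => by unfold ep; rw [if_pos (hall i)]
          rw [Finset.sum_congr rfl fun i _ => this i]
          simp
        have hd1 : (1 : ℤ) ≤ d := by exact_mod_cast hd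
        have hnon : 0 ≤ ∑ i, 2 * (1 - eps i) * ((lam i : ℤ) + 1) :=
          Finset.sum_nonneg fun i _ => hterm i
        rw [he1]
        nlinarith
      · push_neg at hall
        obtain ⟨i0, hi0⟩ := hall
        have he0 : eps i0 = 0 := by simp only [heps, ep, if_neg hi0]
        have hsingle : 2 * (1 - eps i0) * ((lam i0 : ℤ) + 1)
            ≤ ∑ i, 2 * (1 - eps i) * ((lam i : ℤ) + 1) :=
          Finset.single_le_sum (fun i _ => hterm i) (Finset.mem_univ i0)
        rw [he0] at hsingle
        have : (0 : ℤ) ≤ (lam i0 : ℤ) := Nat.cast_nonneg _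
        nlinarith [sq_nonneg (∑ i, eps i)]
    linarith
  constructor <;> linarith
end
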